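/- For every integer k ≥ 1, let 𝒮_k = (S_k, λ) be the temporal digraph with vertex set {s_1,…,s_k} ∪ {c} ∪ {t_1,…,t_k}, arcs s_i→c with λ(s_i→c) = {1} and arcs c→t_i with λ(c→t_i) = {2} for all i ∈ {1,…,k}. Then 𝒮_k is a temporal oriented tree, the maximum size of a temporal antichain of 𝒮_k is k, and the minimum cardinality of a temporally disjoint path cover of 𝒮_k is 2k − 1. In particular, temporal oriented trees (even with a star as underlying graph) do not satisfy the TD-Dilworth property. -/

import Mathlib

/-! A temporal digraph on vertex set `V` is encoded by its arc-labeling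
`lab : V → V → Finset ℕ`: there is an arc `u → v` iff `lab u v` is nonempty,
and `lab u v` is the (finite) set of time-steps at which the arc `u → v` is active. -/

/-- A temporal (directed) path: vertices `verts 0, …, verts len`, pairwise distinct,
traversed at strictly increasing times `times 0 < … < times (len-1)`, each arc being
active at the time it is traversed. A single vertex (`len = 0`) is a temporal path. -/
structure TPath {V : Type*} (lab : V → V → Finset ℕ) where
  len : ℕ
  verts : Fin (len + 1) → V
  times : Fin len → ℕ
  inj : Function.Injective verts
  mono : StrictMono times
  mem_lab : ∀ i : Fin len, times i ∈ lab (verts i.castSucc) (verts i.succ)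

/-- The set of vertices lying on a temporal path. -/
def TPath.vertexSet {V : Type*} {lab : V → V → Finset ℕ} (P : TPath lab) : Set V :=
  Set.range P.verts

/-- `P` is a temporal path from `u` to `v`. -/
def TPath.FromTo {V : Type*} {lab : V → V → Finset ℕ} (P : TPath lab) (u v : V) : Prop :=
  P.verts 0 = u ∧ P.verts (Fin.last P.len) = v

/-- Two vertices are temporally connected if some temporal path contains both of them. -/
def TempConnected {V : Type*} (lab : V → V → Finset ℕ) (u v : V) : Prop :=
  ∃ P : TPath lab, u ∈ P.vertexSet ∧ v ∈ P.vertexSet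

/-- A temporal antichain: a set of pairwise not temporally connected vertices. -/
def IsTempAntichain {V : Type*} (lab : V → V → Finset ℕ) (S : Set V) : Prop :=
  S.Pairwise fun u v => ¬ TempConnected lab u v

/-- A family of temporal paths is a temporal path cover if every vertex lies on some path. -/
def IsTPC {V : Type*} (lab : V → V → Finset ℕ) {m : ℕ} (C : Fin m → TPath lab) : Prop :=
  ∀ v : V, ∃ i, v ∈ (C i).vertexSet

/-- Two temporal paths are temporally disjoint if any two of their arcs sharing an
end-vertex are traversed at distinct time-steps. -/
def TDisjoint {V : Type*} {lab : V → V → Finset ℕ} (P Q : TPath lab) : Prop :=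
  ∀ i : Fin P.len, ∀ j : Fin Q.len,
    (P.verts i.castSucc = Q.verts j.castSucc ∨ P.verts i.castSucc = Q.verts j.succ ∨
     P.verts i.succ = Q.verts j.castSucc ∨ P.verts i.succ = Q.verts j.succ) →
    P.times i ≠ Q.times j

/-- The set of possible cardinalities of temporal path covers. -/
def tpcSizes {V : Type*} (lab : V → V → Finset ℕ) : Set ℕ :=
  {m | ∃ C : Fin m → TPath lab, IsTPC lab C}

/-- The set of possible cardinalities of temporally disjoint path covers. -/
def tdpcSizes {V : Type*} (lab : V → V → Finset ℕ) : Set ℕ :=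
  {m | ∃ C : Fin m → TPath lab, IsTPC lab C ∧ ∀ i j, i ≠ j → TDisjoint (C i) (C j)}

/-- The set of possible cardinalities of temporal antichains. -/
def antichainSizes {V : Type*} (lab : V → V → Finset ℕ) : Set ℕ :=
  {m | ∃ S : Finset V, S.card = m ∧ IsTempAntichain lab ↑S}

/-- The underlying undirected graph (forget orientations and labels). -/
def underlyingGraph {V : Type*} (lab : V → V → Finset ℕ) : SimpleGraph V where
  Adj u v := u ≠ v ∧ ((lab u v).Nonempty ∨ (lab v u).Nonempty)
  symm := ⟨by intro u v h; exact ⟨h.1.symm, h.2.symm⟩⟩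
  loopless := ⟨by intro v h; exact h.1 rfl⟩

/-- All time labels are positive integers. -/
def PositiveLabels {V : Type*} (lab : V → V → Finset ℕ) : Prop :=
  ∀ u v : V, ∀ t ∈ lab u v, 0 < t

/-- A temporal oriented tree: the underlying undirected graph is a tree and the digraph is
an orientation of it (no pair of opposite arcs, no loops). -/
def IsTemporalOrientedTree {V : Type*} (lab : V → V → Finset ℕ) : Prop :=
  (underlyingGraph lab).IsTree ∧ ∀ u v : V, (lab u v).Nonempty → lab v u = ∅

/-- The connectivity graph: two distinct vertices are adjacent iff temporally connected. -/
def connGraph {V : Type*} (lab : V → V → Finset ℕ) : SimpleGraph V where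
  Adj u v := u ≠ v ∧ TempConnected lab u v
  symm := ⟨by intro u v h; exact ⟨h.1.symm, h.2.imp fun P hP => ⟨hP.2, hP.1⟩⟩⟩
  loopless := ⟨by intro v h; exact h.1 rfl⟩

/-- `c` lists the vertices of an induced cycle of length `n` of `G`, in cyclic order:
the listed vertices are distinct and two of them are adjacent iff they are cyclically
consecutive. -/
def IsInducedCycle {V : Type*} (G : SimpleGraph V) (n : ℕ) (c : Fin n → V) : Prop :=
  Function.Injective c ∧
    ∀ i j : Fin n, G.Adj (c i) (c j) ↔ ((i.val + 1) % n = j.val ∨ (j.val + 1) % n = i.val)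

/-- A hole: an induced cycle of length at least 5. -/
def HasHole {V : Type*} (G : SimpleGraph V) : Prop :=
  ∃ n, 5 ≤ n ∧ ∃ c : Fin n → V, IsInducedCycle G n c

/-- An anti-hole: an induced subgraph whose complement is a cycle of length at least 5. -/
def HasAntihole {V : Type*} (G : SimpleGraph V) : Prop :=
  ∃ n, 5 ≤ n ∧ ∃ c : Fin n → V, IsInducedCycle Gᶜ n c

/-- A graph is weakly chordal if it has no hole and no anti-hole. -/
def WeaklyChordal {V : Type*} (G : SimpleGraph V) : Prop :=
  ¬ HasHole G ∧ ¬ HasAntihole G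

/-! Every arc of the star `𝒮ₖ` is incident to the centre and is traversed at time 1 or 2.
Two temporally disjoint paths therefore never share a time-step, so a temporally disjoint
path cover has at most two arcs in total, and covering the `2k + 1` vertices needs at least
`2k - 1` paths; the path `s₁ c t₁` together with `2k - 2` trivial paths attains this. On the
other hand the `k` paths `sᵢ c tᵢ` cover the star, and a path meets an antichain at most once,
so antichains have at most `k` vertices; the sources, which no arc enters, form one. -/

namespace TPath

variable {V : Type*} {lab : V → V → Finset ℕ}

def single (v : V) : TPath lab where
  len := 0
  verts := fun _ => v
  times := Fin.elim0
  inj := fun i j _ => Subsingleton.elim (α := Fin 1) i j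
  mono := fun i => i.elim0
  mem_lab := fun i => i.elim0

lemma mem_vertexSet_single (v : V) : v ∈ (single v : TPath lab).vertexSet := ⟨0, rfl⟩

lemma tdisjoint_single_left (v : V) (Q : TPath lab) : TDisjoint (single v) Q :=
  fun i => i.elim0

lemma tdisjoint_single_right (P : TPath lab) (v : V) : TDisjoint P (single v) :=
  fun _ j => j.elim0

def path₂ {u v w : V} (huv : u ≠ v) (huw : u ≠ w) (hvw : v ≠ w) {t₁ t₂ : ℕ}
    (h₁ : t₁ ∈ lab u v) (h₂ : t₂ ∈ lab v w) (ht : t₁ < t₂) : TPath lab where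
  len := 2
  verts := ![u, v, w]
  times := ![t₁, t₂]
  inj := by
    intro i j hij
    fin_cases i <;> fin_cases j <;> simp_all [eq_comm]
  mono := by
    intro i j hij
    fin_cases i <;> fin_cases j <;> simp_all
  mem_lab := by
    intro i
    fin_cases i <;> simpa

lemma eq_zero_of_verts_eq (P : TPath lab) {u : V} (hu : ∀ w, lab w u = ∅)
    {p : Fin (P.len + 1)} (hp : P.verts p = u) : p = 0 := by
  rcases Fin.eq_zero_or_eq_succ p with rfl | ⟨j, rfl⟩
  · rfl
  · simpa [hp, hu] using P.mem_lab j

end TPath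

section General

variable {V : Type*} {lab : V → V → Finset ℕ}

lemma not_tempConnected_of_no_in_arcs {u v : V} (hu : ∀ w, lab w u = ∅)
    (hv : ∀ w, lab w v = ∅) (huv : u ≠ v) : ¬ TempConnected lab u v := by
  rintro ⟨P, ⟨p, hp⟩, ⟨q, hq⟩⟩
  obtain rfl := P.eq_zero_of_verts_eq hu hp
  obtain rfl := P.eq_zero_of_verts_eq hv hq
  exact huv (hp.symm.trans hq)

lemma card_le_of_isTempAntichain_of_mem_tpcSizes {S : Finset V} {m : ℕ}
    (hS : IsTempAntichain lab ↑S) (hm : m ∈ tpcSizes lab) : S.card ≤ m := by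
  obtain ⟨C, hC⟩ := hm
  choose f hf using hC
  have hinj : Set.InjOn f S := by
    intro u hu v hv huv
    by_contra hne
    exact hS hu hv hne ⟨C (f u), hf u, huv ▸ hf v⟩
  simpa using Finset.card_le_card_of_injOn f (fun _ _ => Finset.mem_univ _) hinj

lemma card_le_sum_len_add_of_isTPC [Fintype V] {m : ℕ} {C : Fin m → TPath lab}
    (hC : IsTPC lab C) : Fintype.card V ≤ ∑ i, (C i).len + m := by
  classical
  have hcover : (Finset.univ : Finset V) ⊆
      Finset.univ.biUnion fun i => Finset.univ.image (C i).verts := by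
    intro v _
    obtain ⟨i, p, hp⟩ := hC v
    exact Finset.mem_biUnion.2
      ⟨i, Finset.mem_univ _, Finset.mem_image.2 ⟨p, Finset.mem_univ _, hp⟩⟩
  calc Fintype.card V
      ≤ (Finset.univ.biUnion fun i => Finset.univ.image (C i).verts).card :=
        Finset.card_le_card hcover
    _ ≤ ∑ i, (Finset.univ.image (C i).verts).card := Finset.card_biUnion_le
    _ ≤ ∑ i, ((C i).len + 1) :=
        Finset.sum_le_sum fun i _ => Finset.card_image_le.trans (by simp)
    _ = ∑ i, (C i).len + m := by simp [Finset.sum_add_distrib]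

lemma sum_len_le_card_of_hub {c : V} (hc : ∀ u v, (lab u v).Nonempty → u = c ∨ v = c)
    {T : Finset ℕ} (hT : ∀ u v, lab u v ⊆ T) {m : ℕ} {C : Fin m → TPath lab}
    (hC : ∀ i j, i ≠ j → TDisjoint (C i) (C j)) : ∑ i, (C i).len ≤ T.card := by
  let times : Fin m → Finset ℕ := fun i => Finset.univ.image (C i).times
  have hdisj : (Set.univ : Set (Fin m)).PairwiseDisjoint times := by
    intro i _ j _ hij
    refine Finset.disjoint_left.2 fun t hti htj => ?_
    obtain ⟨a, -, rfl⟩ := Finset.mem_image.1 hti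
    obtain ⟨b, -, hba⟩ := Finset.mem_image.1 htj
    refine hC i j hij a b ?_ hba.symm
    rcases hc _ _ ⟨_, (C i).mem_lab a⟩ with ha | ha <;>
      rcases hc _ _ ⟨_, (C j).mem_lab b⟩ with hb | hb <;> simp [ha, hb]
  calc ∑ i, (C i).len = ∑ i, (times i).card := by
        simp [times, Finset.card_image_of_injective _ (C _).mono.injective]
    _ = (Finset.univ.biUnion times).card :=
        (Finset.card_biUnion fun i _ j _ => hdisj trivial trivial).symm
    _ ≤ T.card := Finset.card_le_card <| Finset.biUnion_subset.2 fun i _ =>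
        Finset.image_subset_iff.2 fun a _ => hT _ _ ((C i).mem_lab a)

lemma mem_tdpcSizes_of_fintype {ι : Type*} [Fintype ι] (C : ι → TPath lab)
    (hcover : ∀ v, ∃ i, v ∈ (C i).vertexSet)
    (hdisj : ∀ i j, i ≠ j → TDisjoint (C i) (C j)) :
    Fintype.card ι ∈ tdpcSizes lab := by
  let e := Fintype.equivFin ι
  exact ⟨C ∘ e.symm, fun v => (hcover v).imp' e fun i hi => by simpa using hi,
    fun i j hij => hdisj _ _ (e.symm.injective.ne hij)⟩

/-- A temporal path together with the trivial paths at all vertices it misses. -/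
lemma card_sub_len_mem_tdpcSizes [Fintype V] (P : TPath lab) :
    Fintype.card V - P.len ∈ tdpcSizes lab := by
  classical
  let C : Option {v // v ∉ P.vertexSet} → TPath lab := fun i => i.elim P fun v => .single v
  have hcard : Fintype.card (Option {v // v ∉ P.vertexSet}) = Fintype.card V - P.len := by
    have hle := Fintype.card_le_of_injective _ P.inj
    have hrange : Fintype.card P.vertexSet = P.len + 1 := by
      rw [← Fintype.card_fin (P.len + 1), ← Set.card_range_of_injective P.inj]
      exact Fintype.card_congr' rfl
    rw [Fintype.card_option, Fintype.card_subtype_compl, hrange]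
    simp only [Fintype.card_fin] at hle
    omega
  rw [← hcard]
  refine mem_tdpcSizes_of_fintype C (fun v => ?_) fun i j hij => ?_
  · by_cases hv : v ∈ P.vertexSet
    · exact ⟨none, hv⟩
    · exact ⟨some ⟨v, hv⟩, TPath.mem_vertexSet_single v⟩
  · rcases i with _ | i
    · rcases j with _ | j
      · exact absurd rfl hij
      · exact TPath.tdisjoint_single_right P j.1
    · exact TPath.tdisjoint_single_left i.1 _

end General

namespace TemporalStar

abbrev Vertex (k : ℕ) := Fin k ⊕ (Unit ⊕ Fin k)

variable {k : ℕ}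

def source (i : Fin k) : Vertex k := .inl i

def center : Vertex k := .inr (.inl ())

def sink (i : Fin k) : Vertex k := .inr (.inr i)

def level : Vertex k → ℕ := Sum.elim (fun _ => 0) (Sum.elim (fun _ => 1) fun _ => 2)

-- Sources, centre and sinks have levels 0, 1, 2, which gives `sᵢ → c` at time 1 and
-- `c → tᵢ` at time 2.
variable (k) in
def lab (u v : Vertex k) : Finset ℕ := if level v = level u + 1 then {level v} else ∅

lemma card_vertex : Fintype.card (Vertex k) = 2 * k + 1 := by
  simp only [Fintype.card_sum, Fintype.card_fin, Fintype.card_unit]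
  ring

lemma lab_subset (u v : Vertex k) : lab k u v ⊆ {1, 2} := by
  rcases u with _ | _ | _ <;> rcases v with _ | _ | _ <;> simp [lab, level]

lemma eq_center_of_lab_nonempty {u v : Vertex k} (h : (lab k u v).Nonempty) :
    u = center ∨ v = center := by
  rcases u with _ | _ | _ <;> rcases v with _ | _ | _ <;> simp_all [lab, level, center]

lemma lab_source (u : Vertex k) (i : Fin k) : lab k u (source i) = ∅ := by
  rcases u with _ | _ | _ <;> rfl

lemma underlyingGraph_eq_starGraph : underlyingGraph (lab k) = SimpleGraph.starGraph center := by
  ext u v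
  simp only [underlyingGraph, SimpleGraph.starGraph_adj, and_congr_right_iff]
  intro _
  rcases u with _ | _ | _ <;> rcases v with _ | _ | _ <;> simp_all [lab, level, center]

lemma isTemporalOrientedTree : IsTemporalOrientedTree (lab k) := by
  refine ⟨underlyingGraph_eq_starGraph ▸ SimpleGraph.isTree_starGraph center, fun u v h => ?_⟩
  rcases u with _ | _ | _ <;> rcases v with _ | _ | _ <;> simp_all [lab, level]

lemma isTempAntichain_sources :
    IsTempAntichain (lab k)
      ↑(Finset.univ.map ⟨source, Sum.inl_injective⟩ : Finset (Vertex k)) := by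
  simp only [Finset.coe_map, Finset.coe_univ, Set.image_univ]
  rintro _ ⟨i, rfl⟩ _ ⟨j, rfl⟩ hij
  exact not_tempConnected_of_no_in_arcs (lab_source · i) (lab_source · j) hij

def spoke (i : Fin k) : TPath (lab k) :=
  .path₂ (u := source i) (v := center) (w := sink i) (by simp [source, center])
    (by simp [source, sink]) (by simp [center, sink]) (t₁ := 1) (t₂ := 2)
    (by simp [lab, level, source, center]) (by simp [lab, level, center, sink]) one_lt_two

lemma k_mem_tpcSizes (hk : 1 ≤ k) : k ∈ tpcSizes (lab k) := by
  refine ⟨spoke, fun v => ?_⟩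
  rcases v with i | _ | i
  · exact ⟨i, 0, rfl⟩
  · exact ⟨⟨0, hk⟩, 1, rfl⟩
  · exact ⟨i, 2, rfl⟩

lemma two_mul_sub_one_mem_tdpcSizes (hk : 1 ≤ k) : 2 * k - 1 ∈ tdpcSizes (lab k) := by
  have h := card_sub_len_mem_tdpcSizes (spoke ⟨0, hk⟩)
  rwa [card_vertex, show (spoke _).len = 2 from rfl,
    show 2 * k + 1 - 2 = 2 * k - 1 by omega] at h

lemma two_mul_sub_one_le_of_mem_tdpcSizes {m : ℕ} (hm : m ∈ tdpcSizes (lab k)) :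
    2 * k - 1 ≤ m := by
  obtain ⟨C, hC, hdisj⟩ := hm
  have hvert := card_le_sum_len_add_of_isTPC hC
  have harcs := sum_len_le_card_of_hub (fun _ _ => eq_center_of_lab_nonempty) lab_subset hdisj
  rw [card_vertex] at hvert
  rw [Finset.card_pair (by norm_num)] at harcs
  omega

end TemporalStar

/-- The temporal star 𝒮ₖ (arcs sᵢ → c at time 1 and c → tᵢ at time 2) is a temporal
oriented tree whose maximum temporal antichain has size k but whose minimum temporally
disjoint path cover has size 2k - 1; hence temporal oriented trees do not satisfy the
TD-Dilworth property. -/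
theorem star_example (k : ℕ) (hk : 1 ≤ k)
    (lab : (Fin k ⊕ (Unit ⊕ Fin k)) → (Fin k ⊕ (Unit ⊕ Fin k)) → Finset ℕ)
    (hlab : ∀ u v, lab u v =
      match u, v with
      | Sum.inl _, Sum.inr (Sum.inl _) => ({1} : Finset ℕ)
      | Sum.inr (Sum.inl _), Sum.inr (Sum.inr _) => ({2} : Finset ℕ)
      | _, _ => (∅ : Finset ℕ)) :
    IsTemporalOrientedTree lab ∧
    IsGreatest (antichainSizes lab) k ∧
    IsLeast (tdpcSizes lab) (2 * k - 1) := by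
  obtain rfl : lab = TemporalStar.lab k := by
    funext u v
    rw [hlab]
    rcases u with _ | _ | _ <;> rcases v with _ | _ | _ <;> rfl
  refine ⟨TemporalStar.isTemporalOrientedTree, ⟨?_, ?_⟩, ?_, ?_⟩
  · exact ⟨_, by simp, TemporalStar.isTempAntichain_sources⟩
  · rintro m ⟨S, rfl, hS⟩
    exact card_le_of_isTempAntichain_of_mem_tpcSizes hS (TemporalStar.k_mem_tpcSizes hk)
  · exact TemporalStar.two_mul_sub_one_mem_tdpcSizes hk
  · exact fun m => TemporalStar.two_mul_sub_one_le_of_mem_tdpcSizes
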